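/- Let f, f₁, f₂ : ℝⁿ → ℝ with f = f₁ + f₂, and suppose for i = 1, 2 and a fixed x, g there exist γ_i > 0 such that ‖∇f_i(x+h) − ∇f_i(x) − H_i(x)h‖_* ≤ ‖g‖_*‖h‖/γ_i for all h with ‖h‖ ≤ γ_i and ⟨∇²f(x)h,h⟩ + ⟨g,h⟩ ≤ 0. Then with H := H₁ + H₂ and γ := (γ₁^{-1} + γ₂^{-1})^{-1}, the inequality ‖∇f(x+h) − ∇f(x) − H(x)h‖_* ≤ ‖g‖_*‖h‖/γ holds for all h with ‖h‖ ≤ γ and ⟨∇²f(x)h,h⟩ + ⟨g,h⟩ ≤ 0. -/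

import Mathlib

/-! The residual of `f = f₁ + f₂` against `H₁ + H₂` is the sum of the two residuals, so the
triangle inequality for the dual norm bounds it by `‖g‖_* ‖h‖ (γ₁⁻¹ + γ₂⁻¹) = ‖g‖_* ‖h‖ / γ`.
Both individual bounds apply at `h`, because `γ ≤ min γ₁ γ₂` and the region condition involves
only the Hessian of the sum, which is common to all three. The triangle inequality holds since
`‖s‖_* = ‖√(B⁻¹) s‖`. -/

open Matrix
open scoped RealInnerProductSpace

noncomputable def normB {n : ℕ} (B : Matrix (Fin n) (Fin n) ℝ)
    (h : EuclideanSpace ℝ (Fin n)) : ℝ :=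
  Real.sqrt ⟪h, Matrix.toEuclideanLin B h⟫

noncomputable def dualNormB {n : ℕ} (B : Matrix (Fin n) (Fin n) ℝ)
    (s : EuclideanSpace ℝ (Fin n)) : ℝ :=
  Real.sqrt ⟪s, Matrix.toEuclideanLin B⁻¹ s⟫

theorem gradient_add {𝕜 F : Type*} [RCLike 𝕜] [NormedAddCommGroup F] [InnerProductSpace 𝕜 F]
    [CompleteSpace F] {f g : F → 𝕜} {x : F}
    (hf : DifferentiableAt 𝕜 f x) (hg : DifferentiableAt 𝕜 g x) :
    gradient (f + g) x = gradient f x + gradient g x := by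
  simp only [gradient, ← map_add, ← fderiv_add hf hg]

lemma inv_inv_add_inv_le_left {a b : ℝ} (ha : 0 < a) (hb : 0 ≤ b) : (a⁻¹ + b⁻¹)⁻¹ ≤ a := by
  simpa using inv_anti₀ (inv_pos.mpr ha) (le_add_of_nonneg_right (inv_nonneg.mpr hb))

open scoped MatrixOrder in
lemma sqrt_inner_toEuclideanLin_eq_norm {ι : Type*} [Fintype ι] [DecidableEq ι]
    {A : Matrix ι ι ℝ} (hA : A.PosSemidef) (s : EuclideanSpace ℝ ι) :
    Real.sqrt ⟪s, Matrix.toEuclideanLin A s⟫ = ‖Matrix.toEuclideanCLM (𝕜 := ℝ) (CFC.sqrt A) s‖ := by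
  have hsqrt : IsSelfAdjoint (Matrix.toEuclideanCLM (𝕜 := ℝ) (CFC.sqrt A)) :=
    (CFC.sqrt_nonneg A).isSelfAdjoint.map _
  have hquad : ⟪s, Matrix.toEuclideanLin A s⟫ =
      ⟪Matrix.toEuclideanCLM (𝕜 := ℝ) (CFC.sqrt A) s,
        Matrix.toEuclideanCLM (𝕜 := ℝ) (CFC.sqrt A) s⟫ := by
    rw [← ContinuousLinearMap.adjoint_inner_right, hsqrt.adjoint_eq,
      ← ContinuousLinearMap.comp_apply, ← ContinuousLinearMap.mul_def, ← map_mul, CFC.sqrt_mul_sqrt_self _ hA.nonneg]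
    rfl
  rw [hquad, real_inner_self_eq_norm_sq, Real.sqrt_sq (norm_nonneg _)]

lemma dualNormB_add_le {n : ℕ} {B : Matrix (Fin n) (Fin n) ℝ} (hB : B.PosSemidef)
    (a b : EuclideanSpace ℝ (Fin n)) :
    dualNormB B (a + b) ≤ dualNormB B a + dualNormB B b := by
  simp only [dualNormB, sqrt_inner_toEuclideanLin_eq_norm hB.inv]
  rw [map_add]
  exact norm_add_le _ _

theorem gradient_normalized_smoothness_sum_general {n : ℕ}
    (f f₁ f₂ : EuclideanSpace ℝ (Fin n) → ℝ)
    (hsum : f = f₁ + f₂)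
    (hf₁ : Differentiable ℝ f₁) (hf₂ : Differentiable ℝ f₂)
    (B : Matrix (Fin n) (Fin n) ℝ) (hB : B.PosDef)
    (H₁ H₂ : Matrix (Fin n) (Fin n) ℝ)
    (x g : EuclideanSpace ℝ (Fin n))
    (γ₁ γ₂ : ℝ) (hγ₁ : 0 < γ₁) (hγ₂ : 0 < γ₂)
    (hGNS₁ : ∀ h : EuclideanSpace ℝ (Fin n),
      normB B h ≤ γ₁ →
      ⟪fderiv ℝ (gradient f) x h, h⟫ + ⟪g, h⟫ ≤ 0 →
      dualNormB B (gradient f₁ (x + h) - gradient f₁ x - Matrix.toEuclideanLin H₁ h)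
        ≤ dualNormB B g * normB B h / γ₁)
    (hGNS₂ : ∀ h : EuclideanSpace ℝ (Fin n),
      normB B h ≤ γ₂ →
      ⟪fderiv ℝ (gradient f) x h, h⟫ + ⟪g, h⟫ ≤ 0 →
      dualNormB B (gradient f₂ (x + h) - gradient f₂ x - Matrix.toEuclideanLin H₂ h)
        ≤ dualNormB B g * normB B h / γ₂)
    (γ : ℝ) (hγ : γ = (γ₁⁻¹ + γ₂⁻¹)⁻¹) :
    ∀ h : EuclideanSpace ℝ (Fin n),
      normB B h ≤ γ →
      ⟪fderiv ℝ (gradient f) x h, h⟫ + ⟪g, h⟫ ≤ 0 →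
      dualNormB B (gradient f (x + h) - gradient f x -
          Matrix.toEuclideanLin (H₁ + H₂) h)
        ≤ dualNormB B g * normB B h / γ := by
  intro h hle hregion
  have hγle₁ : γ ≤ γ₁ := hγ ▸ inv_inv_add_inv_le_left hγ₁ hγ₂.le
  have hγle₂ : γ ≤ γ₂ := hγ ▸ add_comm γ₁⁻¹ γ₂⁻¹ ▸ inv_inv_add_inv_le_left hγ₂ hγ₁.le
  have hresidual : gradient f (x + h) - gradient f x - Matrix.toEuclideanLin (H₁ + H₂) h =
      (gradient f₁ (x + h) - gradient f₁ x - Matrix.toEuclideanLin H₁ h) +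
        (gradient f₂ (x + h) - gradient f₂ x - Matrix.toEuclideanLin H₂ h) := by
    rw [hsum, gradient_add (hf₁ _) (hf₂ _), gradient_add (hf₁ _) (hf₂ _), map_add,
      LinearMap.add_apply]
    abel
  calc _ ≤ dualNormB B (gradient f₁ (x + h) - gradient f₁ x - Matrix.toEuclideanLin H₁ h) +
          dualNormB B (gradient f₂ (x + h) - gradient f₂ x - Matrix.toEuclideanLin H₂ h) :=
        hresidual ▸ dualNormB_add_le hB.posSemidef _ _
    _ ≤ dualNormB B g * normB B h / γ₁ + dualNormB B g * normB B h / γ₂ :=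
        add_le_add (hGNS₁ h (hle.trans hγle₁) hregion) (hGNS₂ h (hle.trans hγle₂) hregion)
    _ = dualNormB B g * normB B h / γ := by
        rw [hγ, div_inv_eq_mul, mul_add, div_eq_mul_inv, div_eq_mul_inv]

theorem gradient_normalized_smoothness_sum {n : ℕ}
    (f f₁ f₂ : EuclideanSpace ℝ (Fin n) → ℝ)
    (hsum : f = f₁ + f₂)
    (hf₁ : Differentiable ℝ f₁) (hf₂ : Differentiable ℝ f₂)
    (hf : ContDiff ℝ 2 f)
    (B : Matrix (Fin n) (Fin n) ℝ) (hB : B.PosDef)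
    (H₁ H₂ : Matrix (Fin n) (Fin n) ℝ)
    (x g : EuclideanSpace ℝ (Fin n))
    (γ₁ γ₂ : ℝ) (hγ₁ : 0 < γ₁) (hγ₂ : 0 < γ₂)
    (hGNS₁ : ∀ h : EuclideanSpace ℝ (Fin n),
      normB B h ≤ γ₁ →
      ⟪fderiv ℝ (gradient f) x h, h⟫ + ⟪g, h⟫ ≤ 0 →
      dualNormB B (gradient f₁ (x + h) - gradient f₁ x - Matrix.toEuclideanLin H₁ h)
        ≤ dualNormB B g * normB B h / γ₁)
    (hGNS₂ : ∀ h : EuclideanSpace ℝ (Fin n),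
      normB B h ≤ γ₂ →
      ⟪fderiv ℝ (gradient f) x h, h⟫ + ⟪g, h⟫ ≤ 0 →
      dualNormB B (gradient f₂ (x + h) - gradient f₂ x - Matrix.toEuclideanLin H₂ h)
        ≤ dualNormB B g * normB B h / γ₂)
    (γ : ℝ) (hγ : γ = (γ₁⁻¹ + γ₂⁻¹)⁻¹) :
    ∀ h : EuclideanSpace ℝ (Fin n),
      normB B h ≤ γ →
      ⟪fderiv ℝ (gradient f) x h, h⟫ + ⟪g, h⟫ ≤ 0 →
      dualNormB B (gradient f (x + h) - gradient f x -
          Matrix.toEuclideanLin (H₁ + H₂) h)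
        ≤ dualNormB B g * normB B h / γ :=
  gradient_normalized_smoothness_sum_general f f₁ f₂ hsum hf₁ hf₂ B hB H₁ H₂ x g γ₁ γ₂ hγ₁ hγ₂ hGNS₁
    hGNS₂ γ hγ
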